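/- For all record types ρ₁, ρ₂, ρ₃ ∈ 𝕋_R: if lbl(ρ₂) = lbl(ρ₃) then (ρ₁+ρ₂) ∩ (ρ₁+ρ₃) = ρ₁ + (ρ₂∩ρ₃); that is, type-merge distributes on the right over intersection provided the two right-hand record types have the same label set. -/
import Mathlib


/-- Intersection and record types `𝕋`. Record types are the types satisfying `IsRec`. -/
inductive Ty where
  | const : Nat → Ty
  | omega : Ty
  | arrow : Ty → Ty → Ty
  | inter : Ty → Ty → Ty
  | empty : Ty
  | fld : Nat → Ty → Ty
  | merge : Ty → Ty → Ty
deriving DecidableEq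

/-- The record types `𝕋_R ⊆ 𝕋`. -/
inductive IsRec : Ty → Prop where
  | empty : IsRec .empty
  | fld (l : Nat) (σ : Ty) : IsRec (.fld l σ)
  | merge {ρ₁ ρ₂ : Ty} : IsRec ρ₁ → IsRec ρ₂ → IsRec (.merge ρ₁ ρ₂)
  | inter {ρ₁ ρ₂ : Ty} : IsRec ρ₁ → IsRec ρ₂ → IsRec (.inter ρ₁ ρ₂)

/-- Subtyping on `𝕋`: the least preorder satisfying the BCD axioms together with
the record and record-merge axioms. -/
inductive TySub : Ty → Ty → Prop where
  | refl (σ : Ty) : TySub σ σ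
  | trans {σ τ υ : Ty} : TySub σ τ → TySub τ υ → TySub σ υ
  | le_omega (σ : Ty) : TySub σ .omega
  | omega_arrow : TySub .omega (.arrow .omega .omega)
  | inter_left (σ τ : Ty) : TySub (.inter σ τ) σ
  | inter_right (σ τ : Ty) : TySub (.inter σ τ) τ
  | le_inter {σ τ₁ τ₂ : Ty} : TySub σ τ₁ → TySub σ τ₂ → TySub σ (.inter τ₁ τ₂)
  | arrow_inter (σ τ₁ τ₂ : Ty) :
      TySub (.inter (.arrow σ τ₁) (.arrow σ τ₂)) (.arrow σ (.inter τ₁ τ₂))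
  | arrow_mono {σ₁ σ₂ τ₁ τ₂ : Ty} : TySub σ₂ σ₁ → TySub τ₁ τ₂ →
      TySub (.arrow σ₁ τ₁) (.arrow σ₂ τ₂)
  | fld_empty (l : Nat) (σ : Ty) : TySub (.fld l σ) .empty
  | fld_inter (l : Nat) (σ τ : Ty) :
      TySub (.inter (.fld l σ) (.fld l τ)) (.fld l (.inter σ τ))
  | fld_mono {σ τ : Ty} (l : Nat) : TySub σ τ → TySub (.fld l σ) (.fld l τ)
  | merge_empty_r {ρ : Ty} : IsRec ρ → TySub (.merge ρ .empty) ρ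
  | merge_empty_r' {ρ : Ty} : IsRec ρ → TySub ρ (.merge ρ .empty)
  | merge_empty_l {ρ : Ty} : IsRec ρ → TySub (.merge .empty ρ) ρ
  | merge_empty_l' {ρ : Ty} : IsRec ρ → TySub ρ (.merge .empty ρ)
  | merge_assoc {ρ₁ ρ₂ ρ₃ : Ty} : IsRec ρ₁ → IsRec ρ₂ → IsRec ρ₃ →
      TySub (.merge (.merge ρ₁ ρ₂) ρ₃) (.merge ρ₁ (.merge ρ₂ ρ₃))
  | merge_assoc' {ρ₁ ρ₂ ρ₃ : Ty} : IsRec ρ₁ → IsRec ρ₂ → IsRec ρ₃ →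
      TySub (.merge ρ₁ (.merge ρ₂ ρ₃)) (.merge (.merge ρ₁ ρ₂) ρ₃)
  | merge_inter {ρ₁ ρ₂ ρ₃ : Ty} : IsRec ρ₁ → IsRec ρ₂ → IsRec ρ₃ →
      TySub (.merge (.inter ρ₁ ρ₂) ρ₃) (.inter (.merge ρ₁ ρ₃) (.merge ρ₂ ρ₃))
  | merge_inter' {ρ₁ ρ₂ ρ₃ : Ty} : IsRec ρ₁ → IsRec ρ₂ → IsRec ρ₃ →
      TySub (.inter (.merge ρ₁ ρ₃) (.merge ρ₂ ρ₃)) (.merge (.inter ρ₁ ρ₂) ρ₃)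
  | fld_absorb {ρ : Ty} (l : Nat) (σ τ : Ty) : IsRec ρ →
      TySub (.merge (.fld l σ) (.inter (.fld l τ) ρ)) (.inter (.fld l τ) ρ)
  | fld_absorb' {ρ : Ty} (l : Nat) (σ τ : Ty) : IsRec ρ →
      TySub (.inter (.fld l τ) ρ) (.merge (.fld l σ) (.inter (.fld l τ) ρ))
  | fld_comm {ρ : Ty} {l l' : Nat} (σ τ : Ty) : l ≠ l' → IsRec ρ →
      TySub (.merge (.fld l σ) (.inter (.fld l' τ) ρ))
          (.inter (.fld l' τ) (.merge (.fld l σ) ρ))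
  | fld_comm' {ρ : Ty} {l l' : Nat} (σ τ : Ty) : l ≠ l' → IsRec ρ →
      TySub (.inter (.fld l' τ) (.merge (.fld l σ) ρ))
          (.merge (.fld l σ) (.inter (.fld l' τ) ρ))
  | merge_mono_l {ρ₁ ρ₂ ρ : Ty} : IsRec ρ₁ → IsRec ρ₂ → IsRec ρ →
      TySub ρ₁ ρ₂ → TySub (.merge ρ₁ ρ) (.merge ρ₂ ρ)
  | merge_congr_r {ρ ρ₁ ρ₂ : Ty} : IsRec ρ → IsRec ρ₁ → IsRec ρ₂ →
      TySub ρ₁ ρ₂ → TySub ρ₂ ρ₁ → TySub (.merge ρ ρ₁) (.merge ρ ρ₂)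

/-- Type equality: mutual subtyping. -/
def TyEq (σ τ : Ty) : Prop := TySub σ τ ∧ TySub τ σ
/-- The label map on record types. -/
def lbl : Ty → Finset Nat
  | .const _ => ∅
  | .omega => ∅
  | .arrow _ _ => ∅
  | .empty => ∅
  | .fld l _ => {l}
  | .inter ρ₁ ρ₂ => lbl ρ₁ ∪ lbl ρ₂
  | .merge ρ₁ ρ₂ => lbl ρ₁ ∪ lbl ρ₂


/- ## Auxiliary development -/

theorem TySub.interCongr {a b c d : Ty} (h1 : TySub a c) (h2 : TySub b d) :
    TySub (.inter a b) (.inter c d) :=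
  .le_inter ((TySub.inter_left a b).trans h1) ((TySub.inter_right a b).trans h2)

theorem TyEq.rfl {a : Ty} : TyEq a a := ⟨.refl a, .refl a⟩

theorem TyEq.symm {a b : Ty} (h : TyEq a b) : TyEq b a := ⟨h.2, h.1⟩

theorem TyEq.trans {a b c : Ty} (h1 : TyEq a b) (h2 : TyEq b c) : TyEq a c :=
  ⟨h1.1.trans h2.1, h2.2.trans h1.2⟩

theorem TyEq.interCongr {a b c d : Ty} (h1 : TyEq a c) (h2 : TyEq b d) :
    TyEq (.inter a b) (.inter c d) :=
  ⟨h1.1.interCongr h2.1, h1.2.interCongr h2.2⟩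

theorem TyEq.mergeCongr {a b c d : Ty} (ha : IsRec a) (hb : IsRec b) (hc : IsRec c)
    (hd : IsRec d) (h1 : TyEq a c) (h2 : TyEq b d) : TyEq (.merge a b) (.merge c d) :=
  ⟨(TySub.merge_mono_l ha hc hb h1.1).trans (TySub.merge_congr_r hc hb hd h2.1 h2.2),
   (TySub.merge_mono_l hc ha hd h1.2).trans (TySub.merge_congr_r ha hd hb h2.2 h2.1)⟩

theorem TyEq.interAssoc {a b c : Ty} :
    TyEq (.inter a (.inter b c)) (.inter (.inter a b) c) :=
  ⟨.le_inter (.le_inter (.inter_left _ _) ((TySub.inter_right _ _).trans (.inter_left _ _)))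
      ((TySub.inter_right _ _).trans (.inter_right _ _)),
   .le_inter ((TySub.inter_left _ _).trans (.inter_left _ _))
      (.le_inter ((TySub.inter_left _ _).trans (.inter_right _ _)) (.inter_right _ _))⟩

theorem TyEq.interSwap {a b c : Ty} :
    TyEq (.inter a (.inter b c)) (.inter b (.inter a c)) :=
  ⟨.le_inter ((TySub.inter_right _ _).trans (.inter_left _ _))
      (.le_inter (.inter_left _ _) ((TySub.inter_right _ _).trans (.inter_right _ _))),
   .le_inter ((TySub.inter_right _ _).trans (.inter_left _ _))
      (.le_inter (.inter_left _ _) ((TySub.inter_right _ _).trans (.inter_right _ _)))⟩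

/-- Label set of a normal form. -/
def labels : List (Nat × Ty) → Finset Nat
  | [] => ∅
  | (l, _) :: L => insert l (labels L)

/-- Semantics of a normal form: a right-nested intersection of fields ending in `⟨⟩`. -/
def sem : List (Nat × Ty) → Ty
  | [] => .empty
  | (l, σ) :: L => .inter (.fld l σ) (sem L)

/-- Merge of two normal forms (the right one wins on common labels). -/
def mergeL : List (Nat × Ty) → List (Nat × Ty) → List (Nat × Ty)
  | [], B => B
  | (l, σ) :: A, B => if l ∈ labels B then mergeL A B else (l, σ) :: mergeL A B

theorem semRec (L : List (Nat × Ty)) : IsRec (sem L) := by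
  induction L with
  | nil => exact .empty
  | cons p L ih => exact .inter (.fld p.1 p.2) ih

theorem sem_sub_empty (L : List (Nat × Ty)) : TySub (sem L) .empty := by
  induction L with
  | nil => exact .refl _
  | cons p L ih => exact (TySub.inter_right _ _).trans ih

theorem semAppend (X Y : List (Nat × Ty)) :
    TyEq (sem (X ++ Y)) (.inter (sem X) (sem Y)) := by
  induction X with
  | nil =>
    exact ⟨.le_inter (sem_sub_empty Y) (.refl _), .inter_right _ _⟩
  | cons p X ih =>
    obtain ⟨l, σ⟩ := p
    exact (TyEq.interCongr TyEq.rfl ih).trans TyEq.interAssoc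

theorem merge_fld_mem (l : Nat) (σ : Ty) (B : List (Nat × Ty)) (h : l ∈ labels B) :
    TyEq (.merge (.fld l σ) (sem B)) (sem B) := by
  induction B with
  | nil => simp [labels] at h
  | cons p B ih =>
    obtain ⟨l', τ⟩ := p
    by_cases hll : l = l'
    · subst hll
      exact ⟨TySub.fld_absorb l σ τ (semRec B), TySub.fld_absorb' l σ τ (semRec B)⟩
    · have hB : l ∈ labels B := by
        simp [labels, hll] at h; exact h
      refine TyEq.trans ⟨TySub.fld_comm σ τ hll (semRec B),
        TySub.fld_comm' σ τ hll (semRec B)⟩ ?_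
      exact TyEq.interCongr TyEq.rfl (ih hB)

theorem merge_fld_not_mem (l : Nat) (σ : Ty) (B : List (Nat × Ty)) (h : l ∉ labels B) :
    TyEq (.merge (.fld l σ) (sem B)) (.inter (.fld l σ) (sem B)) := by
  induction B with
  | nil =>
    refine TyEq.trans ⟨TySub.merge_empty_r (.fld l σ), TySub.merge_empty_r' (.fld l σ)⟩ ?_
    exact ⟨.le_inter (.refl _) (.fld_empty l σ), .inter_left _ _⟩
  | cons p B ih =>
    obtain ⟨l', τ⟩ := p
    have hll : l ≠ l' := by
      intro e; subst e; simp [labels] at h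
    have hB : l ∉ labels B := by
      intro hB; exact h (by simp [labels, hB])
    refine TyEq.trans ⟨TySub.fld_comm σ τ hll (semRec B),
      TySub.fld_comm' σ τ hll (semRec B)⟩ ?_
    exact (TyEq.interCongr TyEq.rfl (ih hB)).trans TyEq.interSwap.symm

theorem mergeL_sub_right (A B : List (Nat × Ty)) : TySub (sem (mergeL A B)) (sem B) := by
  induction A with
  | nil => exact .refl _
  | cons p A ih =>
    obtain ⟨l, σ⟩ := p
    by_cases h : l ∈ labels B
    · simpa [mergeL, h] using ih
    · simpa [mergeL, h, sem] using (TySub.inter_right _ _).trans ih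

theorem mergeL_sem (A B : List (Nat × Ty)) :
    TyEq (.merge (sem A) (sem B)) (sem (mergeL A B)) := by
  induction A with
  | nil =>
    exact ⟨TySub.merge_empty_l (semRec B), TySub.merge_empty_l' (semRec B)⟩
  | cons p A ih =>
    obtain ⟨l, σ⟩ := p
    have step : TyEq (.merge (sem ((l, σ) :: A)) (sem B))
        (.inter (.merge (.fld l σ) (sem B)) (.merge (sem A) (sem B))) :=
      ⟨TySub.merge_inter (.fld l σ) (semRec A) (semRec B),
       TySub.merge_inter' (.fld l σ) (semRec A) (semRec B)⟩
    by_cases h : l ∈ labels B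
    · simp only [mergeL, h, if_true]
      refine step.trans ?_
      refine (TyEq.interCongr (merge_fld_mem l σ B h) ih).trans ?_
      exact ⟨.inter_right _ _, .le_inter (mergeL_sub_right A B) (.refl _)⟩
    · simp only [mergeL, h, if_false]
      refine step.trans ?_
      refine (TyEq.interCongr (merge_fld_not_mem l σ B h) ih).trans ?_
      show TyEq (.inter (.inter (.fld l σ) (sem B)) (sem (mergeL A B)))
        (.inter (.fld l σ) (sem (mergeL A B)))
      refine ⟨.le_inter ((TySub.inter_left _ _).trans (.inter_left _ _)) (.inter_right _ _),
        .le_inter (.le_inter (.inter_left _ _)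
          ((TySub.inter_right _ _).trans (mergeL_sub_right A B))) (.inter_right _ _)⟩

theorem labels_append (X Y : List (Nat × Ty)) :
    labels (X ++ Y) = labels X ∪ labels Y := by
  induction X with
  | nil => simp [labels]
  | cons p X ih => obtain ⟨l, σ⟩ := p; simp [labels, ih, Finset.insert_union]

theorem labels_mergeL (A B : List (Nat × Ty)) :
    labels (mergeL A B) = labels A ∪ labels B := by
  induction A with
  | nil => simp [mergeL, labels]
  | cons p A ih =>
    obtain ⟨l, σ⟩ := p
    by_cases h : l ∈ labels B
    · simp only [mergeL, h, if_true, labels, ih]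
      ext x
      simp only [Finset.mem_union, Finset.mem_insert]
      constructor
      · tauto
      · rintro ((rfl | hx) | hx) <;> tauto
    · simp only [mergeL, h, if_false, labels, ih, Finset.insert_union]

/-- Normal form of a type. -/
def nf : Ty → List (Nat × Ty)
  | .empty => []
  | .fld l σ => [(l, σ)]
  | .inter a b => nf a ++ nf b
  | .merge a b => mergeL (nf a) (nf b)
  | _ => []

theorem labels_nf (ρ : Ty) : labels (nf ρ) = lbl ρ := by
  induction ρ with
  | const _ => simp [nf, lbl, labels]
  | omega => simp [nf, lbl, labels]
  | arrow _ _ _ _ => simp [nf, lbl, labels]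
  | empty => simp [nf, lbl, labels]
  | fld l σ _ => simp [nf, lbl, labels]
  | inter a b iha ihb => simp [nf, lbl, labels_append, iha, ihb]
  | merge a b iha ihb => simp [nf, lbl, labels_mergeL, iha, ihb]

theorem nf_sem {ρ : Ty} (h : IsRec ρ) : TyEq ρ (sem (nf ρ)) := by
  induction h with
  | empty => exact TyEq.rfl
  | fld l σ =>
    exact ⟨.le_inter (.refl _) (.fld_empty l σ), .inter_left _ _⟩
  | merge ha hb iha ihb =>
    refine TyEq.trans (TyEq.mergeCongr ha hb (semRec _) (semRec _) iha ihb) ?_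
    exact mergeL_sem _ _
  | inter ha hb iha ihb =>
    exact (TyEq.interCongr iha ihb).trans (semAppend _ _).symm

/-- The key list-level lemma. -/
theorem key (A B C : List (Nat × Ty)) (h : labels B = labels C) :
    TyEq (.inter (sem (mergeL A B)) (sem (mergeL A C))) (sem (mergeL A (B ++ C))) := by
  induction A with
  | nil => exact (semAppend B C).symm
  | cons p A ih =>
    obtain ⟨l, σ⟩ := p
    have hBC : labels (B ++ C) = labels B ∪ labels C := labels_append B C
    by_cases hB : l ∈ labels B
    · have hC : l ∈ labels C := h ▸ hB
      have hA : l ∈ labels (B ++ C) := by rw [hBC]; exact Finset.mem_union_left _ hB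
      simpa [mergeL, hB, hC, hA] using ih
    · have hC : l ∉ labels C := h ▸ hB
      have hA : l ∉ labels (B ++ C) := by
        rw [hBC]; simp [hB, hC]
      simp only [mergeL, hB, hC, hA, if_false, sem]
      constructor
      · exact .le_inter ((TySub.inter_left _ _).trans (.inter_left _ _))
          (((TySub.inter_right _ _).interCongr (TySub.inter_right _ _)).trans ih.1)
      · refine .le_inter (.le_inter (.inter_left _ _)
          ((TySub.inter_right _ _).trans (ih.2.trans (.inter_left _ _))))
          (.le_inter (.inter_left _ _)
          ((TySub.inter_right _ _).trans (ih.2.trans (.inter_right _ _))))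

/-- Type-merge distributes on the right over intersection, provided the two
right-hand record types have the same label set. -/
theorem merge_inter_right_distrib (ρ₁ ρ₂ ρ₃ : Ty)
    (h₁ : IsRec ρ₁) (h₂ : IsRec ρ₂) (h₃ : IsRec ρ₃)
    (hl : lbl ρ₂ = lbl ρ₃) :
    TyEq (.inter (.merge ρ₁ ρ₂) (.merge ρ₁ ρ₃)) (.merge ρ₁ (.inter ρ₂ ρ₃)) := by
  have e₁ := nf_sem h₁
  have e₂ := nf_sem h₂
  have e₃ := nf_sem h₃
  have hN : labels (nf ρ₂) = labels (nf ρ₃) := by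
    rw [labels_nf, labels_nf, hl]
  refine TyEq.trans (TyEq.interCongr
      (TyEq.mergeCongr h₁ h₂ (semRec _) (semRec _) e₁ e₂)
      (TyEq.mergeCongr h₁ h₃ (semRec _) (semRec _) e₁ e₃)) ?_
  refine TyEq.trans (TyEq.interCongr (mergeL_sem _ _) (mergeL_sem _ _)) ?_
  refine TyEq.trans (key (nf ρ₁) (nf ρ₂) (nf ρ₃) hN) ?_
  refine TyEq.trans (mergeL_sem (nf ρ₁) (nf ρ₂ ++ nf ρ₃)).symm ?_
  exact TyEq.mergeCongr (semRec _) (semRec _) h₁ (IsRec.inter h₂ h₃) e₁.symm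
    ((semAppend _ _).trans (TyEq.interCongr e₂.symm e₃.symm))
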